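/- Under the setup, the polar function of γ°, namely (γ°)°(p) := sup{p·q : q ∈ ℝ², γ°(q) ≤ 1}, satisfies (γ°)°(p) = max_{0 ≤ j ≤ N−1} n_j·p for every p ∈ ℝ²; i.e., the crystalline energy density γ recovered from the support function γ° is the piecewise linear function γ(p) = max_j n_j·p with n_j = r_j(cos θ_j, sin θ_j). -/

import Mathlib

open Real

/-- Euclidean inner product on `ℝ × ℝ`. -/
def dot (p q : ℝ × ℝ) : ℝ := p.1 * q.1 + p.2 * q.2

/-!
The Wulff shape `W = {q : γ°(q) ≤ 1}` is the polygon whose vertices are the `n_j`: the direction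
`θ_j` is normal to `m_j - m_{j-1}`, so `n_j` is the intersection of the lines `m_{j-1} · q = 1`
and `m_j · q = 1`. Consecutive `m_j` are less than `π` apart and wind once around the origin,
so every `p` is a nonnegative combination `α m_{j-1} + β m_j`; hence `p · q ≤ α + β = p · n_j`
on `W`. Conversely each `n_j` lies in `W` by (γ3): if `m_{j+1} · n_j > 1`, then `-n_j` would lie
in the maximality region of `m_j`, where `m_j · (-n_j) = -1 < 0`, while some `m_k` has
`m_k · (-n_j) ≥ 0`.
-/

lemma dot_comm (p q : ℝ × ℝ) : dot p q = dot q p := by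
  simp only [dot]; ring

lemma dot_add_left (p q r : ℝ × ℝ) : dot (p + q) r = dot p r + dot q r := by
  simp only [dot, Prod.fst_add, Prod.snd_add]; ring

lemma dot_smul_left (s : ℝ) (p q : ℝ × ℝ) : dot (s • p) q = s * dot p q := by
  simp only [dot, Prod.smul_fst, Prod.smul_snd, smul_eq_mul]; ring

lemma dot_smul_right (s : ℝ) (p q : ℝ × ℝ) : dot p (s • q) = s * dot p q := by
  rw [dot_comm, dot_smul_left, dot_comm]

lemma dot_neg_right (p q : ℝ × ℝ) : dot p (-q) = -dot p q := by
  simp only [dot, Prod.fst_neg, Prod.snd_neg]; ring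

lemma dot_zero_right (p : ℝ × ℝ) : dot p 0 = 0 := by
  simp [dot]

lemma eq_zero_of_dot_self_nonpos {p : ℝ × ℝ} (hp : dot p p ≤ 0) : p = 0 := by
  simp only [dot] at hp
  ext <;> simp only [Prod.fst_zero, Prod.snd_zero] <;> nlinarith [sq_nonneg p.1, sq_nonneg p.2]

lemma dot_nonneg_or_of_eq_smul_add_smul {u w p : ℝ × ℝ} {s t : ℝ} (hs : 0 ≤ s) (ht : 0 ≤ t)
    (hp : p = s • u + t • w) : 0 ≤ dot u p ∨ 0 ≤ dot w p := by
  by_contra! h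
  have hpp : dot p p ≤ 0 := by
    nth_rewrite 1 [hp]
    rw [dot_add_left, dot_smul_left, dot_smul_left]
    nlinarith
  simp [eq_zero_of_dot_self_nonpos hpp, dot_zero_right] at h

lemma dot_le_dot_of_eq_smul_add_smul {u w p q v : ℝ × ℝ} {s t : ℝ} (hs : 0 ≤ s) (ht : 0 ≤ t)
    (hp : p = s • u + t • w) (huq : dot u q ≤ 1) (hwq : dot w q ≤ 1)
    (huv : dot u v = 1) (hwv : dot w v = 1) : dot p q ≤ dot p v := by
  subst hp
  simp only [dot_add_left, dot_smul_left, huv, hwv]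
  nlinarith

lemma dot_inv_smul_eq_one {u w e : ℝ × ℝ} (he : dot u e = dot w e) (hw : dot w e ≠ 0) :
    dot u ((dot w e)⁻¹ • e) = 1 ∧ dot w ((dot w e)⁻¹ • e) = 1 := by
  rw [dot_smul_right, dot_smul_right, he, inv_mul_cancel₀ hw]
  exact ⟨rfl, rfl⟩

lemma cross_eq_zero_of_dot_eq_zero {u w e : ℝ × ℝ} (hu : dot u e = 0) (hw : dot w e = 0)
    (he : e.1 ^ 2 + e.2 ^ 2 = 1) : u.1 * w.2 - u.2 * w.1 = 0 := by
  simp only [dot] at hu hw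
  linear_combination -(u.1 * w.2 - u.2 * w.1) * he + (e.1 * w.2 - e.2 * w.1) * hu
    + (e.2 * u.1 - e.1 * u.2) * hw

lemma dot_eq_one_of_normal {u w : ℝ × ℝ} {a b c θ r : ℝ} (huw : u.1 * w.2 - u.2 * w.1 ≠ 0)
    (ha : a = w.1 - u.1) (hb : b = w.2 - u.2)
    (hc : cos c = a / √(a ^ 2 + b ^ 2) ∧ sin c = b / √(a ^ 2 + b ^ 2))
    (hθ : θ = c + π / 2) (hr : r = (dot w (cos θ, sin θ))⁻¹) :
    dot u (r * cos θ, r * sin θ) = 1 ∧ dot w (r * cos θ, r * sin θ) = 1 := by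
  have hD : √(a ^ 2 + b ^ 2) ≠ 0 := by
    intro h0
    have := sin_sq_add_cos_sq c
    rw [hc.1, hc.2, h0, div_zero, div_zero] at this
    norm_num at this
  have hcos : cos θ = -b / √(a ^ 2 + b ^ 2) := by rw [hθ, cos_add_pi_div_two, hc.2, neg_div]
  have hsin : sin θ = a / √(a ^ 2 + b ^ 2) := by rw [hθ, sin_add_pi_div_two, hc.1]
  have hperp : dot u (cos θ, sin θ) = dot w (cos θ, sin θ) := by
    simp only [dot, hcos, hsin]
    field_simp
    rw [ha, hb]
    ring
  have hw : dot w (cos θ, sin θ) ≠ 0 := fun h0 =>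
    huw (cross_eq_zero_of_dot_eq_zero (hperp.trans h0) h0 (sin_sq_add_cos_sq θ ▸ by ring))
  have := dot_inv_smul_eq_one hperp hw
  rwa [Prod.smul_mk, smul_eq_mul, smul_eq_mul, ← hr] at this

lemma mul_cos_mul_sin_sub_pos {η₀ η₁ α β : ℝ} (h₀ : 0 < η₀) (h₁ : 0 < η₁) (hαβ : α < β)
    (hβα : β < α + π) : 0 < η₀ * cos α * (η₁ * sin β) - η₀ * sin α * (η₁ * cos β) := by
  have hsin : 0 < sin (β - α) := sin_pos_of_pos_of_lt_pi (by linarith) (by linarith)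
  calc 0 < η₀ * η₁ * sin (β - α) := by positivity
    _ = _ := by rw [sin_sub]; ring

lemma dot_eq_one_of_consecutive {η₀ η₁ ψ₀ ψ₁ a b c θ r : ℝ} (h₀ : 0 < η₀) (h₁ : 0 < η₁)
    (hψ : ψ₀ < ψ₁) (hψ' : ψ₁ < ψ₀ + π)
    (ha : a = η₁ * cos ψ₁ - η₀ * cos ψ₀) (hb : b = η₁ * sin ψ₁ - η₀ * sin ψ₀)
    (hc : cos c = a / √(a ^ 2 + b ^ 2) ∧ sin c = b / √(a ^ 2 + b ^ 2))
    (hθ : θ = c + π / 2) (hr : r = (η₁ * cos (θ - ψ₁))⁻¹) :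
    dot (η₀ * cos ψ₀, η₀ * sin ψ₀) (r * cos θ, r * sin θ) = 1 ∧
      dot (η₁ * cos ψ₁, η₁ * sin ψ₁) (r * cos θ, r * sin θ) = 1 :=
  dot_eq_one_of_normal (mul_cos_mul_sin_sub_pos h₀ h₁ hψ hψ').ne' ha hb hc hθ
    (by rw [hr, dot, cos_sub]; ring_nf)

lemma dot_le_one_of_region {ι : Type*} {s : Finset ι} {M : ι → ℝ × ℝ} {u w x v : ℝ × ℝ}
    (hregion : ∀ p, dot u p ≤ dot w p → dot x p ≤ dot w p → ∀ k ∈ s, dot (M k) p ≤ dot w p)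
    (hcover : ∀ p, ∃ k ∈ s, 0 ≤ dot (M k) p) (huv : dot u v = 1) (hwv : dot w v = 1) :
    ∀ k ∈ s, dot (M k) v ≤ 1 := by
  have hxv : dot x v ≤ 1 := by
    by_contra! hxv
    obtain ⟨k, hk, hk0⟩ := hcover (-v)
    have := hregion (-v) (by simp only [dot_neg_right, huv, hwv, le_refl])
      (by simp only [dot_neg_right, hwv]; linarith) k hk
    simp only [dot_neg_right, hwv] at this hk0
    linarith
  intro k hk
  exact hwv ▸ hregion v (by rw [huv, hwv]) (by rwa [hwv]) k hk

lemma exists_eq_smul_cos_sin (p : ℝ × ℝ) : ∃ R φ : ℝ, 0 ≤ R ∧ p = R • (cos φ, sin φ) := by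
  refine ⟨‖(⟨p.1, p.2⟩ : ℂ)‖, Complex.arg ⟨p.1, p.2⟩, norm_nonneg _, ?_⟩
  ext
  · simp [Complex.norm_mul_cos_arg]
  · simp [Complex.norm_mul_sin_arg]

lemma cos_sin_eq_smul_add_smul {α β φ : ℝ} (hαφ : α ≤ φ) (hφβ : φ ≤ β) (hαβ : α < β)
    (hβα : β < α + π) : ∃ s t : ℝ, 0 ≤ s ∧ 0 ≤ t ∧
      ((cos φ, sin φ) : ℝ × ℝ) = s • (cos α, sin α) + t • (cos β, sin β) := by
  have hsin : 0 < sin (β - α) := sin_pos_of_pos_of_lt_pi (by linarith) (by linarith)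
  -- `sin (β - α) • e φ = sin (β - φ) • e α + sin (φ - α) • e β` for the unit vectors `e`
  refine ⟨sin (β - φ) / sin (β - α), sin (φ - α) / sin (β - α),
    div_nonneg (sin_nonneg_of_nonneg_of_le_pi (by linarith) (by linarith)) hsin.le,
    div_nonneg (sin_nonneg_of_nonneg_of_le_pi (by linarith) (by linarith)) hsin.le, ?_⟩
  ext <;> simp only [Prod.smul_mk, smul_eq_mul, Prod.fst_add, Prod.snd_add] <;>
    field_simp <;> simp only [sin_sub] <;> ring

lemma Monotone.exists_apply_le_lt_apply_succ {α : Type*} [LinearOrder α] {f : ℤ → α}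
    (hf : Monotone f) {x : α} (hlo : ∃ j, f j ≤ x) (hhi : ∃ j, x < f j) :
    ∃ j, f j ≤ x ∧ x < f (j + 1) := by
  obtain ⟨i, hi⟩ := hhi
  have hbdd : ∃ b : ℤ, ∀ j, f j ≤ x → j ≤ b :=
    ⟨i, fun j hj => le_of_lt (hf.reflect_lt (hj.trans_lt hi))⟩
  obtain ⟨j, hj, hmax⟩ := Int.exists_greatest_of_bdd hbdd hlo
  exact ⟨j, hj, lt_of_not_ge fun h => by linarith [hmax _ h]⟩

lemma exists_apply_le_and_exists_lt_apply {f : ℤ → ℝ} {N : ℤ} {c : ℝ} (hc : 0 < c)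
    (hf : ∀ j, f (j + N) = f j + c) (x : ℝ) : (∃ j, f j ≤ x) ∧ ∃ j, x < f j := by
  let F : AddConstMap ℤ ℝ N c := ⟨f, hf⟩
  have hF (k : ℤ) : f (k • N) = f 0 + k * c := by
    rw [← zsmul_eq_mul]
    exact AddConstMapClass.map_zsmul_const F k
  obtain ⟨k, hk⟩ := exists_int_lt ((x - f 0) / c)
  obtain ⟨l, hl⟩ := exists_int_gt ((x - f 0) / c)
  rw [div_lt_iff₀ hc] at hl
  rw [lt_div_iff₀ hc] at hk
  exact ⟨⟨k • N, by linarith [hF k]⟩, ⟨l • N, by linarith [hF l]⟩⟩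

lemma exists_mem_range_modEq (N : ℕ) (hN : 0 < N) (j : ℤ) :
    ∃ k ∈ Finset.range N, (k : ℤ) ≡ j [ZMOD N] := by
  have h0 : 0 ≤ j % N := Int.emod_nonneg j (by omega)
  have h1 : j % N < N := Int.emod_lt_of_pos j (by omega)
  refine ⟨(j % N).toNat, Finset.mem_range.mpr (by omega), ?_⟩
  rw [Int.toNat_of_nonneg h0]
  exact Int.mod_modEq j N

lemma Function.Periodic.apply_eq_of_modEq {α : Type*} {f : ℤ → α} {N : ℤ}
    (hf : Function.Periodic f N) {x y : ℤ} (h : x ≡ y [ZMOD N]) : f x = f y := by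
  obtain ⟨k, hk⟩ := h.dvd
  rw [show y = x + k • N by rw [smul_eq_mul]; linarith, hf.zsmul k x]

lemma Function.Periodic.exists_mem_range_eq {α : Type*} {f : ℤ → α} {N : ℕ}
    (hf : Function.Periodic f N) (hN : 0 < N) (j : ℤ) : ∃ k ∈ Finset.range N, f k = f j := by
  obtain ⟨k, hk, hkj⟩ := exists_mem_range_modEq N hN j
  exact ⟨k, hk, hf.apply_eq_of_modEq hkj⟩

lemma Function.Periodic.exists_mem_range_eq_of_succ {α : Type*} {f : ℤ → α} {N : ℕ}
    (hf : Function.Periodic f N) (hN : 0 < N) (j : ℤ) :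
    ∃ k ∈ Finset.range N, f (k - 1) = f j ∧ f k = f (j + 1) := by
  obtain ⟨k, hk, hkj⟩ := exists_mem_range_modEq N hN (j + 1)
  refine ⟨k, hk, ?_, hf.apply_eq_of_modEq hkj⟩
  simpa using hf.apply_eq_of_modEq (hkj.sub_right 1)

lemma exists_eq_smul_add_smul_of_angles {η ψ : ℤ → ℝ} {m : ℤ → ℝ × ℝ} {N : ℤ}
    (hηpos : ∀ j, 0 < η j) (hψper : ∀ j, ψ (j + N) = ψ j + 2 * π)
    (hψmono : ∀ j, ψ j < ψ (j + 1)) (hψgap : ∀ j, ψ (j + 1) < ψ j + π)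
    (hm : ∀ j, m j = (η j * cos (ψ j), η j * sin (ψ j))) (p : ℝ × ℝ) :
    ∃ (j : ℤ) (s t : ℝ), 0 ≤ s ∧ 0 ≤ t ∧ p = s • m j + t • m (j + 1) := by
  obtain ⟨R, φ, hR, rfl⟩ := exists_eq_smul_cos_sin p
  obtain ⟨hlo, hhi⟩ := exists_apply_le_and_exists_lt_apply two_pi_pos hψper φ
  obtain ⟨j, hjφ, hφj⟩ :=
    (strictMono_int_of_lt_succ hψmono).monotone.exists_apply_le_lt_apply_succ hlo hhi
  obtain ⟨s, t, hs, ht, hφ⟩ :=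
    cos_sin_eq_smul_add_smul hjφ hφj.le (hψmono j) (hψgap j)
  have hη := hηpos j
  have hη' := hηpos (j + 1)
  refine ⟨j, R * s / η j, R * t / η (j + 1), by positivity, by positivity, ?_⟩
  rw [hφ, hm, hm]
  ext <;> simp only [Prod.smul_mk, Prod.smul_fst, Prod.smul_snd, Prod.fst_add, Prod.snd_add,
    smul_eq_mul] <;> field_simp

/-- Under the assumptions (γ1)–(γ3), the polar function of
`γ°(p) = max_j m_j · p`, namely `(γ°)°(p) = sup {p · q : γ°(q) ≤ 1}`, equals
`max_j n_j · p` for every `p`: the crystalline energy density recovered from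
the support function `γ°` is the piecewise linear function
`γ(p) = max_j n_j · p` with `n_j = r_j (cos θ_j, sin θ_j)`. -/
theorem polar_of_support_is_piecewise_linear
    (N : ℕ) (hN : 3 ≤ N)
    (η ψ : ℤ → ℝ)
    (hηpos : ∀ j, 0 < η j)
    (hηper : ∀ j, η (j + N) = η j)
    (hψper : ∀ j, ψ (j + N) = ψ j + 2 * π)
    (hψmono : ∀ j, ψ j < ψ (j + 1))
    (hψgap : ∀ j, ψ (j + 1) < ψ j + π)
    (m : ℤ → ℝ × ℝ)
    (hm : ∀ j, m j = (η j * cos (ψ j), η j * sin (ψ j)))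
    (γpol : ℝ × ℝ → ℝ)
    (hγpol : ∀ p, γpol p = (Finset.range N).sup'
      (Finset.nonempty_range_iff.mpr (by omega)) (fun j => dot (m (j : ℤ)) p))
    -- (γ3): each maximality region is cut out by the two neighbouring
    -- constraints, and is nonempty (contains a point of strict maximality).
    (hγ3a : ∀ j : ℤ,
      {p : ℝ × ℝ | ∀ k ∈ Finset.range N, dot (m (k : ℤ)) p ≤ dot (m j) p}
        = {p : ℝ × ℝ | dot (m (j - 1)) p ≤ dot (m j) p ∧
            dot (m (j + 1)) p ≤ dot (m j) p})
    (a b c θ r : ℤ → ℝ) (n : ℤ → ℝ × ℝ)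
    (ha : ∀ j, a j = η j * cos (ψ j) - η (j - 1) * cos (ψ (j - 1)))
    (hb : ∀ j, b j = η j * sin (ψ j) - η (j - 1) * sin (ψ (j - 1)))
    (hc : ∀ j, cos (c j) = a j / Real.sqrt (a j ^ 2 + b j ^ 2) ∧
      sin (c j) = b j / Real.sqrt (a j ^ 2 + b j ^ 2))
    (hθ : ∀ j, θ j = c j + π / 2)
    (hr : ∀ j, r j = (η j * cos (θ j - ψ j))⁻¹)
    (hn : ∀ j, n j = (r j * cos (θ j), r j * sin (θ j))) :
    ∀ p : ℝ × ℝ,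
      IsLUB {s : ℝ | ∃ q : ℝ × ℝ, γpol q ≤ 1 ∧ dot p q = s}
        ((Finset.range N).sup' (Finset.nonempty_range_iff.mpr (by omega))
          (fun j => dot (n (j : ℤ)) p)) := by
  have hNpos : 0 < N := by omega
  have hmper : Function.Periodic m N := fun j => by
    rw [hm, hm, hηper, hψper, cos_add_two_pi, sin_add_two_pi]
  have hcone := exists_eq_smul_add_smul_of_angles hηpos hψper hψmono hψgap hm
  have hnonneg (p : ℝ × ℝ) : ∃ k ∈ Finset.range N, 0 ≤ dot (m k) p := by
    obtain ⟨j, s, t, hs, ht, hp⟩ := hcone p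
    obtain ⟨i, hi⟩ : ∃ i, 0 ≤ dot (m i) p :=
      (dot_nonneg_or_of_eq_smul_add_smul hs ht hp).elim (⟨j, ·⟩) (⟨j + 1, ·⟩)
    obtain ⟨k, hk, hki⟩ := hmper.exists_mem_range_eq hNpos i
    exact ⟨k, hk, hki ▸ hi⟩
  have hvertex (j : ℤ) : dot (m (j - 1)) (n j) = 1 ∧ dot (m j) (n j) = 1 := by
    rw [hn, hm, hm]
    exact dot_eq_one_of_consecutive (hηpos _) (hηpos _) (by simpa using hψmono (j - 1))
      (by simpa using hψgap (j - 1)) (ha j) (hb j) (hc j) (hθ j) (hr j)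
  have hwulff (j : ℤ) : γpol (n j) ≤ 1 := by
    rw [hγpol]
    refine Finset.sup'_le _ _ (dot_le_one_of_region (x := m (j + 1)) (fun p h₁ h₂ => ?_) hnonneg
      (hvertex j).1 (hvertex j).2)
    exact ((Set.ext_iff.mp (hγ3a j) p).mpr ⟨h₁, h₂⟩ :)
  have hW (q : ℝ × ℝ) (hq : γpol q ≤ 1) (i : ℤ) : dot (m i) q ≤ 1 := by
    obtain ⟨k, hk, hki⟩ := hmper.exists_mem_range_eq hNpos i
    exact hki ▸ (Finset.le_sup' (fun j : ℕ => dot (m j) q) hk).trans (hγpol q ▸ hq)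
  intro p
  constructor
  · rintro _ ⟨q, hq, rfl⟩
    obtain ⟨j, s, t, hs, ht, hp⟩ := hcone p
    obtain ⟨k, hk, hk₀, hk₁⟩ := hmper.exists_mem_range_eq_of_succ hNpos j
    rw [← hk₀, ← hk₁] at hp
    calc dot p q ≤ dot p (n k) := dot_le_dot_of_eq_smul_add_smul hs ht hp (hW q hq _) (hW q hq _)
          (hvertex k).1 (hvertex k).2
      _ = dot (n k) p := dot_comm _ _
      _ ≤ _ := Finset.le_sup' (fun j : ℕ => dot (n j) p) hk
  · exact fun w hw => Finset.sup'_le _ _ fun k _ => hw ⟨n k, hwulff k, dot_comm _ _⟩
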